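/- arXiv:1407.7346 — 2 statements merged into one kernel-verified Lean document; each statement's English description precedes it below -/
import Mathlib

section
/- Let H₀ be a normalized Hadamard matrix of order n with rows and columns indexed by X, with distinguished index x₀. Suppose P₁, Q₁ are permutation matrices of permutations fixing x₀, and P₂, Q₂ are diagonal ±1 matrices, satisfying P₂⁻¹·P₁⁻¹·H₀·Q₁·Q₂ = H₀. Then (P₂, Q₂) = (I, I) or (P₂, Q₂) = (−I, −I), and moreover P₁⁻¹·H₀·Q₁ = H₀. -/
/-- A Hadamard matrix indexed by a finite set `X`. -/
def IsHadamard {X : Type*} [Fintype X] [DecidableEq X] (H : Matrix X X ℝ) : Prop :=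
  (∀ i j, H i j = 1 ∨ H i j = -1) ∧ H * H.transpose = (Fintype.card X : ℝ) • 1

/-!
Reading the equation entrywise gives `(d i)⁻¹ * H₀ (σ⁻¹ i) (τ⁻¹ j) * e j = H₀ i j`. On row `x₀` and
column `x₀`, which are fixed by the permutations and consist of ones, this says `e j = d x₀` and
`d i = e x₀`; so `d` and `e` are the same constant `c = ±1`, which then cancels from every entry.
-/

namespace Matrix

variable {X K : Type*} [Fintype X] [DecidableEq X]

lemma inv_permMatrix [CommRing K] (σ : Equiv.Perm X) : (σ.permMatrix K)⁻¹ = σ⁻¹.permMatrix K :=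
  inv_eq_right_inv (by rw [← permMatrix_mul, inv_mul_cancel, permMatrix_one])

lemma inv_permMatrix_mul_mul_permMatrix [CommRing K] (σ τ : Equiv.Perm X) (M : Matrix X X K) :
    (σ.permMatrix K)⁻¹ * M * τ.permMatrix K = M.submatrix ⇑σ⁻¹ ⇑τ⁻¹ := by
  rw [inv_permMatrix, PEquiv.toMatrix_toPEquiv_mul, PEquiv.mul_toMatrix_toPEquiv]
  rfl

lemma inv_diagonal_of_ne_zero [Field K] {d : X → K} (hd : ∀ i, d i ≠ 0) :
    (diagonal d)⁻¹ = diagonal d⁻¹ :=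
  inv_eq_right_inv <| by
    rw [diagonal_mul_diagonal, ← diagonal_one]
    exact congrArg diagonal (funext fun i => mul_inv_cancel₀ (hd i))

end Matrix

section

variable {X K : Type*} [Field K] {x₀ : X} {H : Matrix X X K} {σ τ : X → X} {d e : X → K}

theorem exists_const_of_rescaled_submatrix_eq_of_normalized
    (hrow : ∀ j, H x₀ j = 1) (hcol : ∀ i, H i x₀ = 1) (hσ : σ x₀ = x₀) (hτ : τ x₀ = x₀)
    (h : ∀ i j, (d i)⁻¹ * H (σ i) (τ j) * e j = H i j) :
    ∃ c, d = Function.const X c ∧ e = Function.const X c ∧ H.submatrix σ τ = H := by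
  have hrow' : ∀ j, (d x₀)⁻¹ * e j = 1 := fun j => by
    simpa [hσ, hrow] using h x₀ j
  have hcol' : ∀ i, (d i)⁻¹ * e x₀ = 1 := fun i => by
    simpa [hτ, hcol] using h i x₀
  have he : ∀ j, e j = d x₀ := fun j => (eq_of_inv_mul_eq_one (hrow' j)).symm
  have hd : ∀ i, d i = d x₀ := fun i => (eq_of_inv_mul_eq_one (hcol' i)).trans (he x₀)
  have hc : d x₀ ≠ 0 := fun h0 => by simpa [h0] using hrow' x₀
  refine ⟨d x₀, funext hd, funext he, ?_⟩
  ext i j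
  simpa [hd i, he j, mul_comm _ (d x₀), hc] using h i j

end

theorem stabilizer_of_normalized_hadamard_general {X : Type*} [Fintype X] [DecidableEq X]
    (x₀ : X) (H₀ : Matrix X X ℝ)
    (hnormRow : ∀ j, H₀ x₀ j = 1) (hnormCol : ∀ i, H₀ i x₀ = 1)
    (σ τ : Equiv.Perm X) (hσ : σ x₀ = x₀) (hτ : τ x₀ = x₀)
    (d e : X → ℝ) (hd : ∀ i, d i = 1 ∨ d i = -1)
    (heq : (Matrix.diagonal d)⁻¹ * (σ.permMatrix ℝ)⁻¹ * H₀ *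
        τ.permMatrix ℝ * Matrix.diagonal e = H₀) :
    ((Matrix.diagonal d = 1 ∧ Matrix.diagonal e = 1) ∨
      (Matrix.diagonal d = -1 ∧ Matrix.diagonal e = -1)) ∧
    (σ.permMatrix ℝ)⁻¹ * H₀ * τ.permMatrix ℝ = H₀ := by
  have hd_ne_zero : ∀ i, d i ≠ 0 := fun i => by rcases hd i with h | h <;> simp [h]
  rw [Matrix.mul_assoc _ (σ.permMatrix ℝ)⁻¹, Matrix.mul_assoc (Matrix.diagonal d)⁻¹,
    Matrix.inv_permMatrix_mul_mul_permMatrix, Matrix.inv_diagonal_of_ne_zero hd_ne_zero] at heq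
  have hentry : ∀ i j, (d i)⁻¹ * H₀ (σ⁻¹ i) (τ⁻¹ j) * e j = H₀ i j := fun i j => by
    simpa [Matrix.mul_diagonal, Matrix.diagonal_mul] using congrFun₂ heq i j
  obtain ⟨c, rfl, rfl, hfix⟩ := exists_const_of_rescaled_submatrix_eq_of_normalized hnormRow
    hnormCol (Equiv.Perm.inv_eq_iff_eq.mpr hσ.symm) (Equiv.Perm.inv_eq_iff_eq.mpr hτ.symm) hentry
  refine ⟨?_, by rw [Matrix.inv_permMatrix_mul_mul_permMatrix, hfix]⟩
  rcases hd x₀ with rfl | rfl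
  · exact Or.inl ⟨Matrix.diagonal_one, Matrix.diagonal_one⟩
  · have hneg : Matrix.diagonal (Function.const X (-1 : ℝ)) = -1 :=
      (Matrix.diagonal_neg 1).symm.trans (congrArg Neg.neg Matrix.diagonal_one)
    exact Or.inr ⟨hneg, hneg⟩

theorem stabilizer_of_normalized_hadamard {X : Type*} [Fintype X] [DecidableEq X]
    (x₀ : X) (H₀ : Matrix X X ℝ) (hH : IsHadamard H₀)
    (hnormRow : ∀ j, H₀ x₀ j = 1) (hnormCol : ∀ i, H₀ i x₀ = 1)
    (σ τ : Equiv.Perm X) (hσ : σ x₀ = x₀) (hτ : τ x₀ = x₀)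
    (d e : X → ℝ) (hd : ∀ i, d i = 1 ∨ d i = -1) (he : ∀ i, e i = 1 ∨ e i = -1)
    (heq : (Matrix.diagonal d)⁻¹ * (σ.permMatrix ℝ)⁻¹ * H₀ *
        τ.permMatrix ℝ * Matrix.diagonal e = H₀) :
    ((Matrix.diagonal d = 1 ∧ Matrix.diagonal e = 1) ∨
      (Matrix.diagonal d = -1 ∧ Matrix.diagonal e = -1)) ∧
    (σ.permMatrix ℝ)⁻¹ * H₀ * τ.permMatrix ℝ = H₀ :=
  stabilizer_of_normalized_hadamard_general x₀ H₀ hnormRow hnormCol σ τ hσ hτ d e hd heq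
end

section
/- Let H be a Hadamard matrix of order n indexed by X, fix y ∈ X, and let D_y be the diagonal matrix with −1 in position (y,y) and 1 elsewhere on the diagonal. Then the permutation of X × F₂ × F₂ that swaps (y,0,0) with (y,0,1) and fixes all other vertices is a graph isomorphism from the Hadamard graph Γ(H) to the Hadamard graph Γ(D_y·H). -/
/-- `(-1)^e` for `e ∈ F₂`. -/
def sgn (e : ZMod 2) : ℝ := if e = 0 then 1 else -1

/-- `H^{T(a)}`: the matrix `H` if `a = 0`, its transpose if `a = 1`. -/
def Ht {X : Type*} (H : Matrix X X ℝ) (a : ZMod 2) : Matrix X X ℝ :=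
  if a = 0 then H else H.transpose

/-- The Hadamard graph `Γ(H)` on `X × F₂ × F₂`: `(x,a,b)` is adjacent to `(y,c,d)`
iff `a ≠ c` and `(H^{T(a)})_{x,y} = (-1)^{b+d}`. -/
def hadamardGraph {X : Type*} (H : Matrix X X ℝ) :
    SimpleGraph (X × ZMod 2 × ZMod 2) :=
  SimpleGraph.fromRel (fun v w => v.2.1 ≠ w.2.1 ∧ Ht H v.2.1 v.1 w.1 = sgn (v.2.2 + w.2.2))

/-!
Negating the rows of `H` indexed by `S ⊆ X` multiplies `H x z` by `-1` exactly when `x ∈ S`. Every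
edge of the Hadamard graph joins a vertex `(x, 0, b)` to a vertex `(z, 1, d)` and its condition reads
`H x z = (-1)^(b+d)` from either end, so the sign is absorbed by flipping `b` on the vertices
`(x, 0, b)` with `x ∈ S`. For `S = {y}` this flip is the transposition of `(y, 0, 0)` and `(y, 0, 1)`.
-/

lemma ZMod.eq_zero_or_eq_one (e : ZMod 2) : e = 0 ∨ e = 1 := by
  revert e; decide

lemma sgn_add (e f : ZMod 2) : sgn (e + f) = sgn e * sgn f := by
  rcases e.eq_zero_or_eq_one with rfl | rfl <;> rcases f.eq_zero_or_eq_one with rfl | rfl <;>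
    simp [sgn, CharTwo.add_self_eq_zero]

lemma sgn_ne_zero (e : ZMod 2) : sgn e ≠ 0 := by
  unfold sgn; split_ifs <;> norm_num

section RowFlip

variable {X : Type*}

def rowFlip (s : X → ZMod 2) : Equiv.Perm (X × ZMod 2 × ZMod 2) :=
  Function.Involutive.toPerm (fun v => (v.1, v.2.1, v.2.2 + if v.2.1 = 0 then s v.1 else 0))
    fun v => by simp only [add_assoc, CharTwo.add_self_eq_zero, add_zero]

lemma rowFlip_apply (s : X → ZMod 2) (x : X) (a b : ZMod 2) :
    rowFlip s (x, a, b) = (x, a, b + if a = 0 then s x else 0) := rfl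

variable [DecidableEq X]

lemma rowFlip_single (y : X) : rowFlip (Pi.single y 1) = Equiv.swap (y, 0, 0) (y, 0, 1) := by
  ext1 ⟨x, a, b⟩
  rw [Equiv.swap_apply_def, rowFlip_apply]
  by_cases hx : x = y
  · subst hx
    rcases a.eq_zero_or_eq_one with rfl | rfl <;> rcases b.eq_zero_or_eq_one with rfl | rfl <;>
      simp [CharTwo.add_self_eq_zero]
  · simp [hx]

variable [Fintype X]

lemma hadamardEdge_diagonal_mul_iff (H : Matrix X X ℝ) (s : X → ZMod 2) (x z : X)
    (a b c d : ZMod 2) :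
    (a ≠ c ∧ Ht (Matrix.diagonal (fun z => sgn (s z)) * H) a x z =
        sgn ((b + if a = 0 then s x else 0) + (d + if c = 0 then s z else 0))) ↔
      (a ≠ c ∧ Ht H a x z = sgn (b + d)) := by
  have h10 : (1 : ZMod 2) ≠ 0 := one_ne_zero
  rcases a.eq_zero_or_eq_one with rfl | rfl <;> rcases c.eq_zero_or_eq_one with rfl | rfl
  · simp
  · simp only [Ht, Matrix.diagonal_mul, if_true, if_neg h10, add_zero, ne_eq, zero_ne_one,
      not_false_eq_true, true_and]
    rw [add_right_comm, sgn_add (b + d), mul_comm (sgn (b + d))]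
    exact mul_right_inj' (sgn_ne_zero _)
  · simp only [Ht, if_false, Matrix.transpose_apply, Matrix.diagonal_mul, if_true, add_zero,
      ne_eq, one_ne_zero, not_false_eq_true, true_and]
    rw [← add_assoc, sgn_add (b + d), mul_comm (sgn (b + d))]
    exact mul_right_inj' (sgn_ne_zero _)
  · simp

def rowFlipIso (H : Matrix X X ℝ) (s : X → ZMod 2) :
    hadamardGraph H ≃g hadamardGraph (Matrix.diagonal (fun z => sgn (s z)) * H) where
  toEquiv := rowFlip s
  map_rel_iff' {v w} := by
    obtain ⟨x, a, b⟩ := v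
    obtain ⟨z, c, d⟩ := w
    simp only [hadamardGraph, SimpleGraph.fromRel_adj]
    rw [(rowFlip s).injective.ne_iff]
    simp only [rowFlip_apply, hadamardEdge_diagonal_mul_iff]

end RowFlip

theorem hadamardGraph_iso_row_negation_general {X : Type*} [Fintype X] [DecidableEq X]
    (H : Matrix X X ℝ) (y : X) :
    ∃ φ : hadamardGraph H ≃g
        hadamardGraph (Matrix.diagonal (fun z => if z = y then (-1 : ℝ) else 1) * H),
      ∀ v : X × ZMod 2 × ZMod 2,
        φ v = if v = (y, 0, 0) then (y, 0, 1) else if v = (y, 0, 1) then (y, 0, 0) else v := by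
  have hsgn : (fun z => sgn ((Pi.single y 1 : X → ZMod 2) z)) =
      fun z => if z = y then (-1 : ℝ) else 1 := by
    ext z
    by_cases hz : z = y <;> simp [sgn, hz]
  rw [← hsgn]
  refine ⟨rowFlipIso H (Pi.single y 1), fun v => ?_⟩
  rw [← Equiv.swap_apply_def, ← rowFlip_single]
  rfl

theorem hadamardGraph_iso_row_negation {X : Type*} [Fintype X] [DecidableEq X]
    (H : Matrix X X ℝ) (hH : IsHadamard H) (y : X) :
    ∃ φ : hadamardGraph H ≃g
        hadamardGraph (Matrix.diagonal (fun z => if z = y then (-1 : ℝ) else 1) * H),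
      ∀ v : X × ZMod 2 × ZMod 2,
        φ v = if v = (y, 0, 0) then (y, 0, 1) else if v = (y, 0, 1) then (y, 0, 0) else v :=
  hadamardGraph_iso_row_negation_general H y
end
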